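/- arXiv:2409.01428 — 5 statements merged into one kernel-verified Lean document; each statement's English description precedes it below -/
import Mathlib

section
/- Let U be a finite set of vertices with q(U) quadruples of which q_good(U) are good, and let ε = q_good(U)/(8 q(U)). Then any vertex a ∈ U participating in the maximum number of good quadruples is U-good, i.e., there exists a subset U_a ⊆ U of size at least ⌈4ε(|U|-1)⌉ such that for every b ∈ U_a, the number of pairs (c,d) in U making {(a,b),(c,d)} a good quadruple is at least ⌈4ε·C(|U|-2,2)⌉, provided |U| ≥ max(w,4) and every max(w,4)-subset of vertices contains a good quadruple. -/
/-
Averaging, with `n = |U|`: a vertex `a` lying in the most good quadruples lies in at least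
`4 q_good / n` of them, and since `q ≥ 3 C(n,4)` this is at least `8 ε (n-1) C(n-2,2)`.
These quadruples are `{(a,b),(c,d)}` with `b ≠ a`, each partner `b` carrying at most
`C(n-2,2)` pairs `(c,d)`. If fewer than `4 ε (n-1)` partners carried `4 ε C(n-2,2)` pairs
or more, the total would fall short of `8 ε (n-1) C(n-2,2)`. For `n < 4` there are no good
quadruples and `ε = 0`.
-/
open SimpleGraph

def interval {V : Type*} (G : SimpleGraph V) (u v : V) : Set V :=
  {x | G.dist u x + G.dist x v = G.dist u v}

def GoodQuad {V : Type*} (G : SimpleGraph V) (a b c d : V) : Prop :=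
  a ≠ b ∧ a ≠ c ∧ a ≠ d ∧ b ≠ c ∧ b ≠ d ∧ c ≠ d ∧
    (interval G a b ∩ interval G c d).Nonempty

/-- Quadruples `{(a,b),(c,d)}` over `U`, encoded as `{{a,b},{c,d}}`. -/
def QuadSet {V : Type*} [DecidableEq V] (U : Finset V) : Set (Finset (Finset V)) :=
  {Q | ∃ a b c d : V, a ∈ U ∧ b ∈ U ∧ c ∈ U ∧ d ∈ U ∧
    a ≠ b ∧ a ≠ c ∧ a ≠ d ∧ b ≠ c ∧ b ≠ d ∧ c ≠ d ∧
    Q = {{a, b}, {c, d}}}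

/-- Good quadruples over `U`. -/
def goodQuadSet {V : Type*} [DecidableEq V] (G : SimpleGraph V) (U : Finset V) :
    Set (Finset (Finset V)) :=
  {Q | ∃ a b c d : V, a ∈ U ∧ b ∈ U ∧ c ∈ U ∧ d ∈ U ∧
    GoodQuad G a b c d ∧ Q = {{a, b}, {c, d}}}

/-- Good quadruples over `U` containing the vertex `a`. -/
def goodQuadsContaining {V : Type*} [DecidableEq V] (G : SimpleGraph V) (U : Finset V)
    (a : V) : Set (Finset (Finset V)) :=
  {Q ∈ goodQuadSet G U | ∃ s ∈ Q, a ∈ s}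

/-- The set of (unordered) pairs `{c,d} ⊆ U` such that `{(a,b),(c,d)}` is a good
quadruple. -/
def goodPairs {V : Type*} [DecidableEq V] (G : SimpleGraph V) (U : Finset V)
    (a b : V) : Set (Finset V) :=
  {s | ∃ c ∈ U, ∃ d ∈ U, s = ({c, d} : Finset V) ∧ GoodQuad G a b c d}

/-- `ε_U = q_good(U) / (8 q(U))`. -/
noncomputable def epsU {V : Type*} [DecidableEq V] (G : SimpleGraph V) (U : Finset V) : ℚ :=
  ((goodQuadSet G U).ncard : ℚ) / (8 * ((QuadSet U).ncard : ℚ))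

/-- `a` is a `U`-good node. -/
def UGood {V : Type*} [DecidableEq V] (G : SimpleGraph V) (U : Finset V) (a : V) : Prop :=
  ∃ Ua : Finset V, Ua ⊆ U ∧
    ⌈4 * epsU G U * ((U.card : ℚ) - 1)⌉ ≤ (Ua.card : ℤ) ∧
    ∀ b ∈ Ua,
      ⌈4 * epsU G U * (((U.card - 2).choose 2 : ℕ) : ℚ)⌉ ≤ ((goodPairs G U a b).ncard : ℤ)

open Finset

lemma Finset.sum_le_card_filter_mul_add_card_mul {ι α : Type*} [Semiring α] [LinearOrder α]
    [IsOrderedRing α] (s : Finset ι) (f : ι → α) {C t : α} (hC : ∀ i ∈ s, f i ≤ C)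
    (ht : 0 ≤ t) : ∑ i ∈ s, f i ≤ #{i ∈ s | t ≤ f i} * C + #s * t := by
  rw [← sum_filter_add_sum_filter_not s fun i => t ≤ f i]
  gcongr
  · simpa using sum_le_card_nsmul _ _ _ fun i hi => hC i (mem_filter.1 hi).1
  · calc ∑ i ∈ s with ¬t ≤ f i, f i ≤ #{i ∈ s | ¬t ≤ f i} * t := by
          simpa using sum_le_card_nsmul {i ∈ s | ¬t ≤ f i} f t fun i hi =>
            (not_le.1 (mem_filter.1 hi).2).le
      _ ≤ #s * t := by gcongr; exact filter_subset _ _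

lemma interval_comm {V : Type*} (G : SimpleGraph V) (u v : V) :
    interval G u v = interval G v u := by
  ext x
  change G.dist u x + G.dist x v = G.dist u v ↔ G.dist v x + G.dist x u = G.dist v u
  rw [G.dist_comm (u := v) (v := x), G.dist_comm (u := x) (v := u), G.dist_comm (u := v)]
  omega

namespace GoodQuad

variable {V : Type*} {G : SimpleGraph V} {a b c d : V}

lemma symm_left (h : GoodQuad G a b c d) : GoodQuad G b a c d := by
  obtain ⟨hab, hac, had, hbc, hbd, hcd, hmeet⟩ := h
  exact ⟨hab.symm, hbc, hbd, hac, had, hcd, by rwa [interval_comm G b a]⟩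

lemma swap (h : GoodQuad G a b c d) : GoodQuad G c d a b := by
  obtain ⟨hab, hac, had, hbc, hbd, hcd, hmeet⟩ := h
  exact ⟨hcd, hac.symm, hbc.symm, had.symm, hbd.symm, hab, by rwa [Set.inter_comm]⟩

lemma card_eq_four [DecidableEq V] (h : GoodQuad G a b c d) : #{a, b, c, d} = 4 := by
  obtain ⟨hab, hac, had, hbc, hbd, hcd, -⟩ := h
  exact Finset.card_eq_four.2 ⟨a, b, c, d, hab, hac, had, hbc, hbd, hcd, rfl⟩

end GoodQuad

section Counting

variable {V : Type*} [DecidableEq V] {G : SimpleGraph V} {U : Finset V} {a b : V}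

lemma quadSet_subset_powerset_powerset (U : Finset V) : QuadSet U ⊆ ↑U.powerset.powerset := by
  rintro Q ⟨a, b, c, d, ha, hb, hc, hd, -, -, -, -, -, -, rfl⟩
  simp only [mem_coe, mem_powerset, insert_subset_iff, singleton_subset_iff]
  exact ⟨⟨ha, hb⟩, hc, hd⟩

lemma finite_quadSet (U : Finset V) : (QuadSet U).Finite :=
  U.powerset.powerset.finite_toSet.subset (quadSet_subset_powerset_powerset U)

lemma goodQuadSet_subset_quadSet : goodQuadSet G U ⊆ QuadSet U := by
  rintro Q ⟨a, b, c, d, ha, hb, hc, hd, ⟨hab, hac, had, hbc, hbd, hcd, -⟩, rfl⟩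
  exact ⟨a, b, c, d, ha, hb, hc, hd, hab, hac, had, hbc, hbd, hcd, rfl⟩

lemma finite_goodQuadSet : (goodQuadSet G U).Finite :=
  (finite_quadSet U).subset goodQuadSet_subset_quadSet

lemma four_le_card_of_nonempty_goodQuadSet (h : (goodQuadSet G U).Nonempty) : 4 ≤ #U := by
  obtain ⟨Q, a, b, c, d, ha, hb, hc, hd, hgood, -⟩ := h
  rw [← hgood.card_eq_four]
  exact card_le_card (by simp [insert_subset_iff, ha, hb, hc, hd])

lemma pair_mem_quadSet {t t' : Finset V} (ht : t ⊆ U) (ht' : t' ⊆ U) (h2 : #t = 2)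
    (h2' : #t' = 2) (hdisj : Disjoint t t') : {t, t'} ∈ QuadSet U := by
  obtain ⟨a, b, hab, rfl⟩ := card_eq_two.1 h2
  obtain ⟨c, d, hcd, rfl⟩ := card_eq_two.1 h2'
  simp only [insert_subset_iff, singleton_subset_iff] at ht ht'
  refine ⟨a, b, c, d, ht.1, ht.2, ht'.1, ht'.2, hab, ?_, ?_, ?_, ?_, hcd, rfl⟩ <;>
    rintro rfl <;> simp at hdisj

/-- Splitting a 4-set into a chosen pair and its complement is two-to-one onto `QuadSet U`. -/
lemma three_mul_choose_four_le_ncard_quadSet (U : Finset V) :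
    3 * (#U).choose 4 ≤ (QuadSet U).ncard := by
  set D := (U.powersetCard 4).sigma fun s => s.powersetCard 2
  let split : (Σ _ : Finset V, Finset V) → Finset (Finset V) := fun p => {p.2, p.1 \ p.2}
  have hD : #D = (#U).choose 4 * 6 := by
    rw [card_sigma, sum_congr rfl fun s hs => by
      rw [card_powersetCard, (mem_powersetCard.1 hs).2], sum_const, card_powersetCard,
      smul_eq_mul]
    rfl
  have hsup : ∀ p ∈ D, (split p).sup id = p.1 := by
    rintro ⟨s, t⟩ hp
    simp only [D, mem_sigma, mem_powersetCard] at hp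
    simpa [split] using hp.2.1
  have hmaps : ∀ p ∈ D, split p ∈ QuadSet U := by
    rintro ⟨s, t⟩ hp
    simp only [D, mem_sigma, mem_powersetCard] at hp
    obtain ⟨⟨hsU, hs⟩, hts, ht⟩ := hp
    refine pair_mem_quadSet (hts.trans hsU) (sdiff_subset.trans hsU) ht ?_ disjoint_sdiff
    rw [card_sdiff_of_subset hts, hs, ht]
  have hfiber : ∀ Q ∈ D.image split, #{p ∈ D | split p = Q} ≤ 2 := by
    intro Q hQ
    obtain ⟨⟨s, t⟩, hp, rfl⟩ := mem_image.1 hQ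
    refine (card_le_card fun p' hp' => ?_).trans
      (card_le_two (a := ⟨s, t⟩) (b := ⟨s, s \ t⟩))
    obtain ⟨hp'D, hsplit⟩ := mem_filter.1 hp'
    obtain ⟨s', t'⟩ := p'
    obtain rfl : s' = s := (hsup _ hp'D).symm.trans (hsplit ▸ hsup _ hp)
    have ht' : t' ∈ split ⟨s', t⟩ := hsplit ▸ mem_insert_self _ _
    simp only [split, mem_insert, mem_singleton] at ht'
    rcases ht' with rfl | rfl <;> simp
  have himage : #(D.image split) ≤ (QuadSet U).ncard := by
    rw [← Set.ncard_coe_finset]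
    refine Set.ncard_le_ncard (fun Q hQ => ?_) (finite_quadSet U)
    obtain ⟨p, hp, rfl⟩ := mem_image.1 (mem_coe.1 hQ)
    exact hmaps p hp
  have := card_le_mul_card_image D 2 hfiber
  omega

lemma exists_eq_of_mem_goodQuadsContaining {Q : Finset (Finset V)}
    (hQ : Q ∈ goodQuadsContaining G U a) :
    ∃ b c d, b ∈ U ∧ c ∈ U ∧ d ∈ U ∧ GoodQuad G a b c d ∧ Q = {{a, b}, {c, d}} := by
  obtain ⟨⟨x, y, c, d, hx, hy, hc, hd, hgood, rfl⟩, s, hs, has⟩ := hQ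
  simp only [mem_insert, mem_singleton] at hs
  rcases hs with rfl | rfl <;> simp only [mem_insert, mem_singleton] at has <;>
    rcases has with rfl | rfl
  · exact ⟨y, c, d, hy, hc, hd, hgood, rfl⟩
  · exact ⟨x, c, d, hx, hc, hd, hgood.symm_left, by rw [pair_comm x]⟩
  · exact ⟨d, x, y, hd, hx, hy, hgood.swap, pair_comm _ _⟩
  · exact ⟨c, x, y, hc, hx, hy, hgood.swap.symm_left, by rw [pair_comm c, pair_comm]⟩

lemma sum_ncard_goodQuadsContaining (G : SimpleGraph V) (U : Finset V) :
    ∑ x ∈ U, (goodQuadsContaining G U x).ncard = 4 * (goodQuadSet G U).ncard := by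
  set F := (finite_goodQuadSet (G := G) (U := U)).toFinset
  have hcontaining : ∀ x, goodQuadsContaining G U x = ↑{Q ∈ F | x ∈ Q.biUnion id} := by
    intro x
    ext Q
    simp [F, goodQuadsContaining, mem_biUnion]
  have hvertices : ∀ Q ∈ F, #{x ∈ U | x ∈ Q.biUnion id} = 4 := by
    intro Q hQ
    obtain ⟨a, b, c, d, ha, hb, hc, hd, hgood, rfl⟩ := (Set.Finite.mem_toFinset _).1 hQ
    rw [filter_mem_eq_inter, inter_eq_right.2 (by simp [insert_subset_iff, *])]
    simpa only [biUnion_insert, singleton_biUnion, id_eq, insert_union, singleton_union]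
      using hgood.card_eq_four
  simp_rw [hcontaining, Set.ncard_coe_finset]
  refine (sum_card_bipartiteAbove_eq_sum_card_bipartiteBelow
    fun x (Q : Finset (Finset V)) => x ∈ Q.biUnion id).trans ((sum_congr rfl hvertices).trans ?_)
  rw [sum_const, smul_eq_mul, mul_comm, Set.ncard_eq_toFinset_card _ finite_goodQuadSet]

lemma goodPairs_subset_powersetCard (a b : V) :
    goodPairs G U a b ⊆ ↑(((U.erase a).erase b).powersetCard 2) := by
  rintro s ⟨c, hc, d, hd, rfl, -, hac, had, hbc, hbd, hcd, -⟩
  simp only [mem_coe, mem_powersetCard, insert_subset_iff, singleton_subset_iff, mem_erase]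
  exact ⟨⟨⟨hbc.symm, hac.symm, hc⟩, hbd.symm, had.symm, hd⟩, card_pair hcd⟩

lemma finite_goodPairs (a b : V) : (goodPairs G U a b).Finite :=
  (finite_toSet _).subset (goodPairs_subset_powersetCard a b)

lemma ncard_goodPairs_le (ha : a ∈ U) (hb : b ∈ U.erase a) :
    (goodPairs G U a b).ncard ≤ (#U - 2).choose 2 := by
  refine (Set.ncard_le_ncard (goodPairs_subset_powersetCard a b) (finite_toSet _)).trans ?_
  rw [Set.ncard_coe_finset, card_powersetCard, card_erase_of_mem hb, card_erase_of_mem ha,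
    Nat.sub_sub]

lemma ncard_goodQuadsContaining_le_sum (G : SimpleGraph V) (U : Finset V) (a : V) :
    (goodQuadsContaining G U a).ncard ≤ ∑ b ∈ U.erase a, (goodPairs G U a b).ncard := by
  set cover : Finset (Finset (Finset V)) := (U.erase a).biUnion fun b =>
    (finite_goodPairs (G := G) (U := U) a b).toFinset.image fun s => {{a, b}, s}
  have hcover : goodQuadsContaining G U a ⊆ ↑cover := by
    intro Q hQ
    obtain ⟨b, c, d, hb, hc, hd, hgood, rfl⟩ := exists_eq_of_mem_goodQuadsContaining hQ
    simp only [cover, coe_biUnion, Set.mem_iUnion, mem_coe, mem_erase, mem_image,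
      Set.Finite.mem_toFinset]
    exact ⟨b, ⟨hgood.1.symm, hb⟩, {c, d}, ⟨c, hc, d, hd, rfl, hgood⟩, rfl⟩
  calc (goodQuadsContaining G U a).ncard ≤ #cover := by
        simpa using Set.ncard_le_ncard hcover (finite_toSet _)
    _ ≤ ∑ b ∈ U.erase a, #((finite_goodPairs (G := G) (U := U) a b).toFinset) :=
        card_biUnion_le.trans (sum_le_sum fun b _ => card_image_le)
    _ = ∑ b ∈ U.erase a, (goodPairs G U a b).ncard :=
        sum_congr rfl fun b _ => (Set.ncard_eq_toFinset_card _ _).symm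

lemma epsU_nonneg (G : SimpleGraph V) (U : Finset V) : 0 ≤ epsU G U := by
  unfold epsU
  positivity

lemma eight_mul_epsU_mul_ncard_quadSet_le (G : SimpleGraph V) (U : Finset V) :
    8 * epsU G U * (QuadSet U).ncard ≤ (goodQuadSet G U).ncard := by
  unfold epsU
  rcases eq_or_ne ((QuadSet U).ncard : ℚ) 0 with hq | hq
  · simp [hq]
  · exact le_of_eq (by field_simp)

lemma epsU_eq_zero_of_card_lt_four (hU : #U < 4) : epsU G U = 0 := by
  have : goodQuadSet G U = ∅ :=
    Set.not_nonempty_iff_eq_empty.1 fun h => hU.not_ge (four_le_card_of_nonempty_goodQuadSet h)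
  simp [epsU, this]

lemma eight_mul_epsU_mul_le_sum_ncard_goodPairs (ha : a ∈ U)
    (hmax : ∀ a' ∈ U,
      (goodQuadsContaining G U a').ncard ≤ (goodQuadsContaining G U a).ncard) :
    8 * epsU G U * ((#U : ℚ) - 1) * ((#U - 2).choose 2 : ℕ) ≤
      ∑ b ∈ U.erase a, ((goodPairs G U a b).ncard : ℚ) := by
  have hn : (0 : ℚ) < #U := by exact_mod_cast card_pos.2 ⟨a, ha⟩
  have hmaximal : 4 * (goodQuadSet G U).ncard ≤ #U * (goodQuadsContaining G U a).ncard := by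
    rw [← sum_ncard_goodQuadsContaining, ← smul_eq_mul]
    exact sum_le_card_nsmul U _ _ hmax
  have hcontaining : ((goodQuadsContaining G U a).ncard : ℚ) ≤
      ∑ b ∈ U.erase a, ((goodPairs G U a b).ncard : ℚ) := by
    exact_mod_cast ncard_goodQuadsContaining_le_sum G U a
  have hquad : (3 * (#U).choose 4 : ℚ) ≤ (QuadSet U).ncard := by
    exact_mod_cast three_mul_choose_four_le_ncard_quadSet U
  -- choose a pair, then a disjoint pair: `C(n,4) * C(4,2) = C(n,2) * C(n-2,2)`
  have hchoose : ((#U).choose 4 : ℚ) * 6 = #U * (#U - 1) / 2 * ((#U - 2).choose 2 : ℕ) := by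
    rw [← Nat.cast_choose_two]
    exact_mod_cast Nat.choose_mul (n := #U) (by norm_num : 2 ≤ 4)
  have hε := epsU_nonneg G U
  refine le_of_mul_le_mul_left ?_ hn
  calc (#U : ℚ) * (8 * epsU G U * (#U - 1) * ((#U - 2).choose 2 : ℕ))
      = 32 * epsU G U * (3 * (#U).choose 4) := by linear_combination -16 * epsU G U * hchoose
    _ ≤ 4 * (8 * epsU G U * (QuadSet U).ncard) := by nlinarith
    _ ≤ 4 * (goodQuadSet G U).ncard := by
        linarith [eight_mul_epsU_mul_ncard_quadSet_le G U]
    _ ≤ #U * (goodQuadsContaining G U a).ncard := by exact_mod_cast hmaximal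
    _ ≤ #U * ∑ b ∈ U.erase a, ((goodPairs G U a b).ncard : ℚ) := by gcongr

end Counting

theorem stmt3_general {V : Type*} [DecidableEq V] (G : SimpleGraph V)
    (U : Finset V) (a : V) (ha : a ∈ U)
    (hmax : ∀ a' ∈ U,
      (goodQuadsContaining G U a').ncard ≤ (goodQuadsContaining G U a).ncard) :
    UGood G U a := by
  set C : ℚ := (((#U - 2).choose 2 : ℕ) : ℚ)
  set heavy := {b ∈ U.erase a | 4 * epsU G U * C ≤ (goodPairs G U a b).ncard}
  refine ⟨heavy, (filter_subset _ _).trans (erase_subset _ _), Int.ceil_le.2 ?_,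
    fun b hb => Int.ceil_le.2 (by exact_mod_cast (mem_filter.1 hb).2)⟩
  push_cast
  rcases lt_or_ge #U 4 with hU | hU
  · simp [epsU_eq_zero_of_card_lt_four hU]
  have hC : 0 < C := Nat.cast_pos.2 (Nat.choose_pos (by omega))
  have hsplit := sum_le_card_filter_mul_add_card_mul (C := C) (U.erase a)
    (fun b => ((goodPairs G U a b).ncard : ℚ))
    (fun b hb => Nat.cast_le.2 (ncard_goodPairs_le ha hb))
    (mul_nonneg (mul_nonneg zero_le_four (epsU_nonneg G U)) hC.le)
  rw [card_erase_of_mem ha, Nat.cast_sub (by omega), Nat.cast_one] at hsplit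
  have hlow := eight_mul_epsU_mul_le_sum_ncard_goodPairs ha hmax
  refine le_of_mul_le_mul_right ?_ hC
  linarith

/-- if every `max w 4`-subset of vertices contains a good quadruple
and `|U| ≥ max w 4`, then any `a ∈ U` participating in the maximum number of good
quadruples of `U` is `U`-good. -/
theorem stmt3 {V : Type*} [Fintype V] [DecidableEq V] (G : SimpleGraph V) (w : ℕ)
    (hall : ∀ S : Finset V, S.card = max w 4 → (goodQuadSet G S).Nonempty)
    (U : Finset V) (hU : max w 4 ≤ U.card) (a : V) (ha : a ∈ U)
    (hmax : ∀ a' ∈ U,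
      (goodQuadsContaining G U a').ncard ≤ (goodQuadsContaining G U a).ncard) :
    UGood G U a :=
  stmt3_general G U a ha hmax
end

section
/- In an S4 graph G, every clique is shattered by the family of halfspaces; consequently the VC dimension of the set of convex bipartitions (halfspaces) of G is at least the clique number ω(G). -/
open SimpleGraph

def IsConvex {V : Type*} (G : SimpleGraph V) (C : Set V) : Prop :=
  ∀ u ∈ C, ∀ v ∈ C, interval G u v ⊆ C

/-- The geodesic convex hull. -/
def gconvexHull {V : Type*} (G : SimpleGraph V) (A : Set V) : Set V :=
  ⋂₀ {C | IsConvex G C ∧ A ⊆ C}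

/-- A halfspace: a convex set with convex complement. -/
def IsHalfspace {V : Type*} (G : SimpleGraph V) (H : Set V) : Prop :=
  IsConvex G H ∧ IsConvex G Hᶜ

/-- The separation axiom `S4`: sets with disjoint convex hulls can be separated
by a halfspace. -/
def S4 {V : Type*} (G : SimpleGraph V) : Prop :=
  ∀ A B : Set V, gconvexHull G A ∩ gconvexHull G B = ∅ →
    ∃ H : Set V, IsHalfspace G H ∧ A ⊆ H ∧ B ⊆ Hᶜ

/-!
A clique is geodesically convex, since the interval between two adjacent vertices contains
nothing but its endpoints. So for `T ⊆ S` with `S` a clique, `T` and `S \ T` are their own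
convex hulls and are disjoint, and `S4` yields a halfspace cutting exactly `T` out of `S`.
-/

namespace SimpleGraph

variable {V : Type*} {G : SimpleGraph V}

-- Without preconnectedness `dist` is `0` between unreachable vertices.
lemma Preconnected.interval_self (hG : G.Preconnected) (u : V) : interval G u u = {u} := by
  ext x
  simp only [interval, Set.mem_ofPred_eq, dist_self, Nat.add_eq_zero_iff, Set.mem_singleton_iff]
  rw [(hG u x).dist_eq_zero_iff]
  constructor
  · exact fun h => h.1.symm
  · rintro rfl
    simp

lemma Preconnected.interval_of_adj (hG : G.Preconnected) {u v : V} (huv : G.Adj u v) :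
    interval G u v = {u, v} := by
  ext x
  simp only [interval, Set.mem_ofPred_eq, dist_eq_one_iff_adj.mpr huv, Set.mem_insert_iff,
    Set.mem_singleton_iff]
  constructor
  · intro h
    rcases Nat.add_eq_one_iff.mp h with ⟨hux, -⟩ | ⟨-, hxv⟩
    · exact .inl ((hG u x).dist_eq_zero_iff.mp hux).symm
    · exact .inr ((hG x v).dist_eq_zero_iff.mp hxv)
  · rintro (rfl | rfl)
    · simp [dist_eq_one_iff_adj.mpr huv]
    · simp [dist_eq_one_iff_adj.mpr huv]

lemma IsClique.isConvex (hG : G.Preconnected) {S : Set V} (hS : G.IsClique S) :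
    IsConvex G S := by
  intro u hu v hv
  rcases eq_or_ne u v with rfl | huv
  · simpa [hG.interval_self] using hu
  · rw [hG.interval_of_adj (hS hu hv huv)]
    exact Set.insert_subset hu (Set.singleton_subset_iff.mpr hv)

lemma gconvexHull_eq_self {C : Set V} (hC : IsConvex G C) : gconvexHull G C = C :=
  (Set.sInter_subset_of_mem (show C ∈ {D | IsConvex G D ∧ C ⊆ D} from ⟨hC, subset_rfl⟩)).antisymm
    fun _ hx _ hD => hD.2 hx

lemma IsClique.exists_isHalfspace_inter_eq (hG : G.Preconnected) (hS4 : S4 G) {S T : Set V}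
    (hS : G.IsClique S) (hTS : T ⊆ S) : ∃ H, IsHalfspace G H ∧ S ∩ H = T := by
  have hT : G.IsClique T := hS.subset hTS
  have hST : G.IsClique (S \ T) := hS.subset Set.sdiff_subset
  have hdisj : gconvexHull G T ∩ gconvexHull G (S \ T) = ∅ := by
    rw [gconvexHull_eq_self (hT.isConvex hG), gconvexHull_eq_self (hST.isConvex hG)]
    exact Set.inter_sdiff_self T S
  obtain ⟨H, hH, hTH, hSTH⟩ := hS4 _ _ hdisj
  refine ⟨H, hH, Set.Subset.antisymm ?_ (Set.subset_inter hTS hTH)⟩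
  rintro x ⟨hxS, hxH⟩
  by_contra hxT
  exact hSTH ⟨hxS, hxT⟩ hxH

end SimpleGraph

theorem stmt7_general {V : Type*} (G : SimpleGraph V)
    (hG : G.Connected) (hS4 : S4 G) :
    (∀ S : Finset V, G.IsClique (S : Set V) → ∀ T ⊆ S,
      ∃ H : Set V, IsHalfspace G H ∧ (S : Set V) ∩ H = (T : Set V)) ∧
    (∀ n : ℕ, (∃ S : Finset V, G.IsNClique n S) →
      ∃ S : Finset V, S.card = n ∧ ∀ T ⊆ S,
        ∃ H : Set V, IsHalfspace G H ∧ (S : Set V) ∩ H = (T : Set V)) := by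
  have shatter : ∀ S : Finset V, G.IsClique (S : Set V) → ∀ T ⊆ S,
      ∃ H : Set V, IsHalfspace G H ∧ (S : Set V) ∩ H = (T : Set V) := fun S hS T hTS =>
    hS.exists_isHalfspace_inter_eq hG.preconnected hS4 (Finset.coe_subset.mpr hTS)
  refine ⟨shatter, ?_⟩
  rintro n ⟨S, hS⟩
  exact ⟨S, hS.card_eq, shatter S hS.isClique⟩

/-- in an `S4` graph every clique is shattered by the halfspaces;
consequently, for every `n` such that `G` has an `n`-clique (in particular
`n = ω(G)`), there is a set of `n` vertices shattered by the halfspaces, so the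
VC dimension of the convex bipartitions is at least `ω(G)`. -/
theorem stmt7 {V : Type*} [Fintype V] [DecidableEq V] (G : SimpleGraph V)
    (hG : G.Connected) (hS4 : S4 G) :
    (∀ S : Finset V, G.IsClique (S : Set V) → ∀ T ⊆ S,
      ∃ H : Set V, IsHalfspace G H ∧ (S : Set V) ∩ H = (T : Set V)) ∧
    (∀ n : ℕ, (∃ S : Finset V, G.IsNClique n S) →
      ∃ S : Finset V, S.card = n ∧ ∀ T ⊆ S,
        ∃ H : Set V, IsHalfspace G H ∧ (S : Set V) ∩ H = (T : Set V)) :=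
  stmt7_general G hG hS4
end

section
/- Let G be a connected bipartite graph with a convex bipartition y into classes C_0 and C_1, and let {u,v} be a cut-edge with y(u)=0, y(v)=1. Then for every vertex x, y(x) = 0 if d(x,u) < d(x,v) and y(x) = 1 if d(x,v) < d(x,u); moreover, since G is bipartite, d(x,u) ≠ d(x,v) for all x, so the labels of all vertices are determined by the single cut-edge. -/
open SimpleGraph

/-!
Distances to the two ends of an edge differ by at most one, and in a bipartite graph they have
different parities, so they differ by exactly one. If `d(x,u) < d(x,v)` for a cut-edge `uv`, then
`u` lies on a geodesic from `x` to `v`; were `x` labelled like `v`, convexity of that class would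
put `u` into it too.
-/

section

variable {V : Type*} {G : SimpleGraph V} {x u v : V}

namespace SimpleGraph

theorem Coloring.even_dist_iff_congr (c : G.Coloring Bool) (h : G.Reachable u v) :
    Even (G.dist u v) ↔ (c u ↔ c v) := by
  obtain ⟨p, hp⟩ := h.exists_walk_length_eq_dist
  rw [← hp, c.even_length_iff_congr p]

theorem Colorable.dist_ne_of_adj (hG : G.Colorable 2) (hx : G.Reachable x u) (huv : G.Adj u v) :
    G.dist x u ≠ G.dist x v := by
  obtain ⟨c⟩ := hG
  let b : G.Coloring Bool := recolorOfEquiv G finTwoEquiv c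
  have hbu := b.even_dist_iff_congr hx
  have hbv := b.even_dist_iff_congr (hx.trans huv.reachable)
  have hb : b u ≠ b v := b.valid huv
  intro h
  rw [h, hbv] at hbu
  exact hb (Bool.eq_iff_iff.mpr (by tauto))

end SimpleGraph

theorem mem_interval_of_adj_of_dist_lt (huv : G.Adj u v) (h : G.dist x u < G.dist x v) :
    u ∈ interval G x v := by
  have hduv : G.dist u v = 1 := dist_eq_one_iff_adj.mpr huv
  show G.dist x u + G.dist u v = G.dist x v
  rcases huv.diff_dist_adj (u := x) with h' | h' | h' <;> omega

theorem IsConvex.mem_of_adj_of_dist_lt {C : Set V} (hC : IsConvex G C) (hx : x ∈ C) (hv : v ∈ C)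
    (huv : G.Adj u v) (h : G.dist x u < G.dist x v) : u ∈ C :=
  hC x hx v hv (mem_interval_of_adj_of_dist_lt huv h)

end

theorem stmt10_general {V : Type*} (G : SimpleGraph V) (hG : G.Connected)
    (hbip : G.Colorable 2) (y : V → Fin 2)
    (h0 : IsConvex G (y ⁻¹' {0})) (h1 : IsConvex G (y ⁻¹' {1}))
    (u v : V) (huv : G.Adj u v) (hu : y u = 0) (hv : y v = 1) :
    ∀ x : V,
      G.dist x u ≠ G.dist x v ∧
      (G.dist x u < G.dist x v → y x = 0) ∧
      (G.dist x v < G.dist x u → y x = 1) := by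
  intro x
  refine ⟨hbip.dist_ne_of_adj (hG.preconnected x u) huv, fun hlt => ?_, fun hlt => ?_⟩
  · by_contra hx
    have hu' : y u = 1 := h1.mem_of_adj_of_dist_lt (show y x = 1 by omega) hv huv hlt
    simp [hu] at hu'
  · by_contra hx
    have hv' : y v = 0 :=
      h0.mem_of_adj_of_dist_lt (show y x = 0 by omega) hu huv.symm hlt
    simp [hv] at hv'

/-- in a connected bipartite graph with a convex bipartition `y`
and a cut-edge `{u,v}` with `y u = 0`, `y v = 1`, every vertex `x` satisfies
`d(x,u) ≠ d(x,v)`, and its label is determined by which of the two distances is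
smaller. -/
theorem stmt10 {V : Type*} [Fintype V] (G : SimpleGraph V) (hG : G.Connected)
    (hbip : G.Colorable 2) (y : V → Fin 2)
    (h0 : IsConvex G (y ⁻¹' {0})) (h1 : IsConvex G (y ⁻¹' {1}))
    (u v : V) (huv : G.Adj u v) (hu : y u = 0) (hv : y v = 1) :
    ∀ x : V,
      G.dist x u ≠ G.dist x v ∧
      (G.dist x u < G.dist x v → y x = 0) ∧
      (G.dist x v < G.dist x u → y x = 1) :=
  stmt10_general G hG hbip y h0 h1 u v huv hu hv
end

section
/- For any graph G on n vertices and any integer c < n, there exists a labeling y of the vertices such that the merging degree δ(G) under y is at most 2c, yet any self-directed learning algorithm makes at least c mistakes in the worst case. -/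
open SimpleGraph

/-- A deterministic self-directed learner: from the history of revealed
(vertex, label) pairs it selects the next vertex to query and predicts a label
for it. -/
structure Learner (V L : Type*) where
  query : List (V × L) → V
  predict : List (V × L) → L

/-- The history of revealed (vertex, label) pairs after `t` rounds against the
true labeling `y`. -/
def Learner.history {V L : Type*} (A : Learner V L) (y : V → L) : ℕ → List (V × L)
  | 0 => []
  | t + 1 =>
      (A.query (A.history y t), y (A.query (A.history y t))) :: A.history y t

/-- The number of prediction mistakes of `A` against `y` in the first `n` rounds. -/
def Learner.mistakes {V L : Type*} [DecidableEq L] (A : Learner V L) (y : V → L)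
    (n : ℕ) : ℕ :=
  ((Finset.range n).filter fun t =>
    A.predict (A.history y t) ≠ y (A.query (A.history y t))).card

/-- `A` queries every vertex within the first `|V|` rounds (the self-directed
protocol requires every vertex to be selected exactly once). -/
def Learner.Covers {V L : Type*} [Fintype V] (A : Learner V L) : Prop :=
  ∀ (y : V → L) (v : V), ∃ t < Fintype.card V, A.query (A.history y t) = v

/-- The graph on `V` whose edges are the edges of `G` joining equally labeled
vertices; its connected components are the maximal connected uniformly labeled
clusters. -/
def sameLabelGraph {V L : Type*} (G : SimpleGraph V) (y : V → L) : SimpleGraph V where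
  Adj u v := G.Adj u v ∧ y u = y v
  symm := by
    constructor
    intro u v h
    exact ⟨h.1.symm, h.2.symm⟩
  loopless := by
    constructor
    intro v h
    exact (G.ne_of_adj h.1) rfl

/-- The inner border of a cluster `C`: its vertices adjacent to vertices outside `C`. -/
def innerBorder {V : Type*} (G : SimpleGraph V) (C : Set V) : Set V :=
  {v ∈ C | ∃ u, u ∉ C ∧ G.Adj v u}

/-- The outer border of a cluster `C`: vertices outside `C` adjacent to the inner
border of `C`. -/
def outerBorder {V : Type*} (G : SimpleGraph V) (C : Set V) : Set V :=
  {u | u ∉ C ∧ ∃ v ∈ innerBorder G C, G.Adj u v}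

/-- The merging degree of `G` under labeling `y`: the sum over all maximal
connected uniformly labeled clusters `C` of `min(|inner border|, |outer border|)`. -/
noncomputable def mergingDegree {V L : Type*} (G : SimpleGraph V) (y : V → L) : ℕ :=
  ∑ᶠ c : (sameLabelGraph G y).ConnectedComponent,
    min ((innerBorder G c.supp).ncard) ((outerBorder G c.supp).ncard)

/-
Label a connected set `S` of `n - c` vertices with `0`, and let an adaptive adversary give each of
the remaining `c` vertices, at its first query, the label the learner did not predict; this is a
fixed labeling because relabeling a vertex not queried yet does not change the run so far. The
cluster containing `S` has its outer border among the `c` other vertices, and every other cluster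
consists of such vertices, so `δ(G) ≤ c + c` while the learner errs `c` times.
-/

namespace SimpleGraph

variable {V : Type*}

theorem induce_singleton_connected (G : SimpleGraph V) (v : V) :
    (G.induce {v}).Connected :=
  (connected_iff _).2 ⟨.of_subsingleton, inferInstance⟩

theorem Connected.exists_connected_induce_card [Fintype V] {G : SimpleGraph V}
    (hG : G.Connected) {k : ℕ} (hk₁ : 1 ≤ k) (hk : k ≤ Fintype.card V) :
    ∃ S : Finset V, S.card = k ∧ (G.induce (S : Set V)).Connected := by
  classical
  induction k, hk₁ using Nat.le_induction with
  | base =>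
    obtain ⟨v⟩ := hG.nonempty
    refine ⟨{v}, Finset.card_singleton v, ?_⟩
    rw [Finset.coe_singleton]
    exact G.induce_singleton_connected v
  | succ k hk₁ ih =>
    obtain ⟨S, hScard, hS⟩ := ih (by omega)
    obtain ⟨u, hu⟩ := Finset.card_pos.1 (hScard ▸ hk₁)
    obtain ⟨w, hw⟩ : ∃ w, w ∉ S := by
      by_contra! h
      rw [Finset.eq_univ_of_forall h, Finset.card_univ] at hScard
      omega
    obtain ⟨d, -, hd, hd'⟩ := (hG.preconnected u w).some.exists_boundary_dart _ hu hw
    refine ⟨insert d.snd S, by rw [Finset.card_insert_of_notMem hd', hScard], ?_⟩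
    rw [Finset.coe_insert, Set.insert_eq, Set.union_comm]
    exact connected_induce_union hS.preconnected (G.induce_singleton_connected _).preconnected
      hd rfl d.adj

theorem ConnectedComponent.sum_ncard_supp_le [Finite V] {G : SimpleGraph V}
    (T : Finset G.ConnectedComponent) {s : Set V} (hT : ∀ C ∈ T, C.supp ⊆ s) :
    ∑ C ∈ T, C.supp.ncard ≤ s.ncard := by
  rw [← finsum_mem_coe_finset, ← T.finite_toSet.ncard_biUnion (fun _ _ => Set.toFinite _)
    fun C _ D _ hCD => G.pairwise_disjoint_supp_connectedComponent hCD]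
  exact Set.ncard_le_ncard (Set.iUnion₂_subset hT)

end SimpleGraph

def sameLabelGraph.homOfInduce {V L : Type*} (G : SimpleGraph V) {y : V → L} {S : Set V}
    {l : L} (hy : ∀ v ∈ S, y v = l) : G.induce S →g sameLabelGraph G y where
  toFun := Subtype.val
  map_rel' {a b} h := ⟨h, (hy a a.2).trans (hy b b.2).symm⟩

theorem mergingDegree_le_two_mul_ncard_compl {V L : Type*} [Finite V] (G : SimpleGraph V)
    (y : V → L) {S : Set V} {l : L} (hS : (G.induce S).Connected) (hy : ∀ v ∈ S, y v = l) :
    mergingDegree G y ≤ 2 * Sᶜ.ncard := by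
  classical
  have := Fintype.ofFinite (sameLabelGraph G y).ConnectedComponent
  obtain ⟨u₀⟩ := hS.nonempty
  set C₀ := (sameLabelGraph G y).connectedComponentMk u₀
  have hS_sub : S ⊆ C₀.supp := fun v hv =>
    ConnectedComponent.sound ((hS.preconnected ⟨v, hv⟩ u₀).map (sameLabelGraph.homOfInduce G hy))
  have hC₀ : min (innerBorder G C₀.supp).ncard (outerBorder G C₀.supp).ncard ≤ Sᶜ.ncard :=
    (min_le_right _ _).trans <| Set.ncard_le_ncard fun u hu => Set.compl_subset_compl.2 hS_sub hu.1
  have hrest : ∑ C ∈ Finset.univ.erase C₀,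
      min (innerBorder G C.supp).ncard (outerBorder G C.supp).ncard ≤ Sᶜ.ncard := by
    refine (Finset.sum_le_sum fun C _ =>
      (min_le_left _ _).trans (Set.ncard_le_ncard fun v hv => hv.1)).trans ?_
    refine ConnectedComponent.sum_ncard_supp_le _ fun C hC v hv hvS => ?_
    exact Finset.ne_of_mem_erase hC (hv.symm.trans (hS_sub hvS))
  rw [mergingDegree, finsum_eq_sum_of_fintype, ← Finset.add_sum_erase _ _ (Finset.mem_univ C₀)]
  omega

namespace Learner

variable {V L : Type*}

theorem mistakes_succ [DecidableEq L] (A : Learner V L) (y : V → L) (t : ℕ) :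
    A.mistakes y (t + 1) = A.mistakes y t +
      if A.predict (A.history y t) ≠ y (A.query (A.history y t)) then 1 else 0 := by
  simp only [mistakes, Finset.card_filter, Finset.sum_range_succ]

variable [DecidableEq V]

def queried (A : Learner V L) (y : V → L) (t : ℕ) : Finset V :=
  (Finset.range t).image fun s => A.query (A.history y s)

theorem queried_succ (A : Learner V L) (y : V → L) (t : ℕ) :
    A.queried y (t + 1) = insert (A.query (A.history y t)) (A.queried y t) := by
  rw [queried, Finset.range_add_one, Finset.image_insert, queried]

variable {A : Learner V L} {y y' : V → L} {t : ℕ}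

theorem Covers.queried_eq_univ [Fintype V] (hA : A.Covers) :
    A.queried y (Fintype.card V) = Finset.univ :=
  Finset.eq_univ_of_forall fun v => by
    obtain ⟨t, ht, rfl⟩ := hA y v
    exact Finset.mem_image_of_mem _ (Finset.mem_range.2 ht)

theorem history_eq_of_eqOn (h : Set.EqOn y y' (A.queried y t)) :
    ∀ s ≤ t, A.history y s = A.history y' s
  | 0, _ => rfl
  | s + 1, hs => by
    have hq : A.query (A.history y s) ∈ A.queried y t :=
      Finset.mem_image_of_mem _ (Finset.mem_range.2 hs)
    rw [history, history, ← history_eq_of_eqOn h s (Nat.le_of_succ_le hs), h hq]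

theorem queried_eq_of_eqOn (h : Set.EqOn y y' (A.queried y t)) :
    A.queried y' t = A.queried y t :=
  Finset.image_congr fun s hs => by
    rw [history_eq_of_eqOn h s (Finset.mem_range.1 hs).le]

theorem mistakes_eq_of_eqOn [DecidableEq L] (h : Set.EqOn y y' (A.queried y t)) :
    A.mistakes y' t = A.mistakes y t := by
  refine congrArg Finset.card (Finset.filter_congr fun s hs => ?_)
  have hs : s < t := Finset.mem_range.1 hs
  rw [← history_eq_of_eqOn h s hs.le, h (Finset.mem_image_of_mem _ (Finset.mem_range.2 hs))]

theorem exists_labeling_card_inter_queried_le_mistakes [DecidableEq L] [Nontrivial L]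
    (A : Learner V L) (F : Finset V) (l₀ : L) (t : ℕ) :
    ∃ y : V → L, (∀ v ∉ F, y v = l₀) ∧ (F ∩ A.queried y t).card ≤ A.mistakes y t := by
  induction t with
  | zero => exact ⟨fun _ => l₀, fun _ _ => rfl, by simp [queried]⟩
  | succ t ih =>
    obtain ⟨y, hyF, hy⟩ := ih
    set v := A.query (A.history y t)
    by_cases hv : v ∈ F ∧ v ∉ A.queried y t
    · obtain ⟨l, hl⟩ := exists_ne (A.predict (A.history y t))
      have hagree : Set.EqOn y (Function.update y v l) (A.queried y t) := fun u hu =>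
        (Function.update_of_ne (ne_of_mem_of_not_mem hu hv.2) _ _).symm
      refine ⟨Function.update y v l, fun u hu => ?_, ?_⟩
      · rw [Function.update_of_ne (ne_of_mem_of_not_mem hv.1 hu).symm, hyF u hu]
      · rw [queried_succ, mistakes_succ, ← history_eq_of_eqOn hagree t le_rfl,
          queried_eq_of_eqOn hagree, mistakes_eq_of_eqOn hagree, Function.update_self,
          if_pos hl.symm, Finset.inter_insert_of_mem hv.1,
          Finset.card_insert_of_notMem fun h => hv.2 (Finset.mem_inter.1 h).2]
        omega
    · refine ⟨y, hyF, ?_⟩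
      have hinter : F ∩ insert v (A.queried y t) = F ∩ A.queried y t := by
        by_cases hvF : v ∈ F
        · rw [Finset.insert_eq_of_mem (not_not.1 fun h => hv ⟨hvF, h⟩)]
        · exact Finset.inter_insert_of_notMem hvF
      rw [queried_succ, mistakes_succ, hinter]
      exact hy.trans (Nat.le_add_right _ _)

end Learner

/-- for every connected graph `G` on `n` vertices, every `c < n`
and every self-directed learner, there is a labeling with merging degree at most
`2c` forcing at least `c` mistakes. -/
theorem stmt12 {V : Type*} [Fintype V] (G : SimpleGraph V) (hG : G.Connected)
    (c : ℕ) (hc : c < Fintype.card V)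
    (A : Learner V (Fin 2)) (hA : A.Covers) :
    ∃ y : V → Fin 2,
      mergingDegree G y ≤ 2 * c ∧ c ≤ A.mistakes y (Fintype.card V) := by
  classical
  obtain ⟨S, hScard, hS⟩ :=
    hG.exists_connected_induce_card (k := Fintype.card V - c) (by omega) (by omega)
  obtain ⟨y, hyS, hmistakes⟩ :=
    A.exists_labeling_card_inter_queried_le_mistakes Sᶜ 0 (Fintype.card V)
  have hcompl : (Sᶜ : Finset V).card = c := by
    rw [Finset.card_compl, hScard]
    omega
  refine ⟨y, ?_, ?_⟩
  · have hdeg := mergingDegree_le_two_mul_ncard_compl G y hS fun v hv =>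
      hyS v (Finset.notMem_compl.2 hv)
    rwa [← Finset.coe_compl, Set.ncard_coe_finset, hcompl] at hdeg
  · rwa [hA.queried_eq_univ, Finset.inter_univ, hcompl] at hmistakes
end

section
/- For any grid graph G (Cartesian product of two paths) and any partition of its vertices into k geodesically convex clusters, if the labeling is chosen by assigning the k labels to the k clusters uniformly at random among all k! bijections, then any self-directed learning algorithm makes in expectation at least k − H_k mistakes, where H_k = ∑_{j=1}^k 1/j; moreover k − H_k ≥ k/4 for all k ≥ 2. -/
open SimpleGraph

/-
A prediction at a vertex of a cluster not seen before is a guess. If `i` clusters have been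
seen when a new one is queried, exchanging the label of the new cluster with each of the
`k - i` unused labels gives `k - i` labelings that agree on everything revealed so far, hence
receive the same prediction, which is correct for at most one of them. So the discovery made
after `i` clusters are seen is predicted correctly for at most `k! / (k - i)` of the `k!`
labelings; as every labeling has exactly `k` discoveries, the mistakes add up to at least
`k · k! - ∑ᵢ k! / (k - i) = k! (k - H_k)`. Finally `H_k ≤ (k + 1) / 2 ≤ 3k / 4` for `k ≥ 2`.
-/

open Finset Function Equiv

theorem sum_range_one_div_add_one_le {k : ℕ} (hk : 1 ≤ k) :
    ∑ j ∈ range k, (1 : ℝ) / (j + 1) ≤ (k + 1) / 2 := by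
  induction k, hk using Nat.le_induction with
  | base => norm_num
  | succ k hk ih =>
    have hterm : (1 : ℝ) / (k + 1) ≤ 1 / 2 := by
      gcongr
      exact_mod_cast Nat.succ_le_succ hk
    rw [sum_range_succ]
    push_cast
    linarith

theorem sum_range_one_div_sub (k : ℕ) :
    ∑ i ∈ range k, (1 : ℝ) / ((k - i : ℕ) : ℝ) = ∑ j ∈ range k, (1 : ℝ) / (j + 1) := by
  rw [← sum_range_reflect]
  refine sum_congr rfl fun j hj => ?_
  rw [show k - (k - 1 - j) = j + 1 by grind, Nat.cast_succ]

namespace Learner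

variable {V α β : Type*} (A : Learner V α)

def queryAt (y : V → α) (t : ℕ) : V := A.query (A.history y t)

def PredictsAt (y : V → α) (t : ℕ) : Prop := A.predict (A.history y t) = y (A.queryAt y t)

theorem history_congr {y y' : V → α} {t : ℕ}
    (h : ∀ s < t, y' (A.queryAt y s) = y (A.queryAt y s)) :
    A.history y' t = A.history y t := by
  induction t with
  | zero => rfl
  | succ t ih =>
    have ih' := ih fun s hs => h s (by omega)
    simp only [history, ih']
    rw [← queryAt, h t t.lt_succ_self]

section Discovery

variable [DecidableEq β] (P : V → β) (y : V → α)

def seenClusters (t : ℕ) : Finset β := (range t).image fun s => P (A.queryAt y s)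

def IsDiscovery (t : ℕ) : Prop := P (A.queryAt y t) ∉ A.seenClusters P y t

-- `i` is the number of clusters seen before the discovery.
def DiscoversCorrectly (i : ℕ) : Prop :=
  ∃ t, A.IsDiscovery P y t ∧ #(A.seenClusters P y t) = i ∧ A.PredictsAt y t

theorem seenClusters_succ (t : ℕ) :
    A.seenClusters P y (t + 1) = insert (P (A.queryAt y t)) (A.seenClusters P y t) := by
  simp [seenClusters, range_add_one]

theorem seenClusters_mono : Monotone (A.seenClusters P y) := fun _ _ h =>
  image_subset_image (range_subset_range.2 h)

theorem card_seenClusters_injOn :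
    Set.InjOn (fun t => #(A.seenClusters P y t)) {t | A.IsDiscovery P y t} := by
  intro s hs t ht hst
  by_contra hne
  wlog hlt : s < t generalizing s t
  · exact this ht hs hst.symm (Ne.symm hne) (by omega)
  have hgrow : #(A.seenClusters P y (s + 1)) = #(A.seenClusters P y s) + 1 := by
    rw [seenClusters_succ, card_insert_of_notMem hs]
  have hle : #(A.seenClusters P y (s + 1)) ≤ #(A.seenClusters P y t) :=
    card_le_card (A.seenClusters_mono P y hlt)
  simp only at hst
  omega

open scoped Classical in
theorem card_filter_isDiscovery (N : ℕ) :
    #{t ∈ range N | A.IsDiscovery P y t} = #(A.seenClusters P y N) := by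
  induction N with
  | zero => simp [seenClusters]
  | succ N ih =>
    rw [range_add_one, filter_insert, seenClusters_succ]
    by_cases h : A.IsDiscovery P y N
    · rw [if_pos h, card_insert_of_notMem (by simp), card_insert_of_notMem h, ih]
    · rw [if_neg h, card_insert_of_mem (not_not.mp h), ih]

theorem seenClusters_eq_univ [Fintype V] [Fintype β] (hA : A.Covers) (hP : Surjective P) :
    A.seenClusters P y (Fintype.card V) = univ := by
  refine eq_univ_of_forall fun c => ?_
  obtain ⟨v, rfl⟩ := hP c
  obtain ⟨t, ht, hv⟩ := hA y v
  exact mem_image.2 ⟨t, mem_range.2 ht, by rw [queryAt, hv]⟩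

open scoped Classical in
theorem card_filter_isDiscovery_le_mistakes_add [DecidableEq α] (N : ℕ) :
    #{t ∈ range N | A.IsDiscovery P y t} ≤
      A.mistakes y N + #{t ∈ range N | A.IsDiscovery P y t ∧ A.PredictsAt y t} := by
  rw [← card_filter_add_card_filter_not (s := {t ∈ range N | A.IsDiscovery P y t})
    (A.PredictsAt y), filter_filter, add_comm]
  gcongr
  exact card_le_card fun t ht => by
    simp only [mem_filter] at ht ⊢
    exact ⟨ht.1.1, ht.2⟩

open scoped Classical in
theorem card_filter_isDiscovery_predictsAt_le [Fintype β] (N : ℕ) :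
    #{t ∈ range N | A.IsDiscovery P y t ∧ A.PredictsAt y t} ≤
      #{i ∈ range (Fintype.card β) | A.DiscoversCorrectly P y i} := by
  refine card_le_card_of_injOn (fun t => #(A.seenClusters P y t)) (fun t ht => ?_)
    ((A.card_seenClusters_injOn P y).mono fun t ht => (mem_filter.1 ht).2.1)
  obtain ⟨-, hdisc, hpred⟩ := mem_filter.1 ht
  have hlt : #(A.seenClusters P y t) < Fintype.card β :=
    card_lt_univ_of_notMem hdisc
  exact mem_filter.2 ⟨mem_range.2 hlt, t, hdisc, rfl, hpred⟩

open scoped Classical in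
theorem card_le_mistakes_add [DecidableEq α] [Fintype V] [Fintype β] (hA : A.Covers)
    (hP : Surjective P) :
    Fintype.card β ≤
      A.mistakes y (Fintype.card V) +
        #{i ∈ range (Fintype.card β) | A.DiscoversCorrectly P y i} := by
  calc Fintype.card β = #{t ∈ range (Fintype.card V) | A.IsDiscovery P y t} := by
        rw [card_filter_isDiscovery, seenClusters_eq_univ _ _ _ hA hP, card_univ]
    _ ≤ _ := (A.card_filter_isDiscovery_le_mistakes_add P y _).trans
        (Nat.add_le_add_left (A.card_filter_isDiscovery_predictsAt_le P y _) _)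

end Discovery

section Relabel

variable [DecidableEq α] (P : V → α) {π : Perm α} {t : ℕ} {ℓ : α}

def relabelDiscovered (π : Perm α) (t : ℕ) (ℓ : α) : Perm α :=
  swap (π (P (A.queryAt (⇑π ∘ P) t))) ℓ * π

theorem relabelDiscovered_apply_discovered :
    A.relabelDiscovered P π t ℓ (P (A.queryAt (⇑π ∘ P) t)) = ℓ :=
  swap_apply_left _ _

theorem relabelDiscovered_apply_of_mem (hdisc : A.IsDiscovery P (⇑π ∘ P) t)
    (hℓ : ℓ ∉ (A.seenClusters P (⇑π ∘ P) t).image π) {c : α}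
    (hc : c ∈ A.seenClusters P (⇑π ∘ P) t) :
    A.relabelDiscovered P π t ℓ c = π c :=
  swap_apply_of_ne_of_ne (π.injective.ne (ne_of_mem_of_not_mem hc hdisc))
    (ne_of_mem_of_not_mem (mem_image_of_mem π hc) hℓ)

theorem history_relabelDiscovered (hdisc : A.IsDiscovery P (⇑π ∘ P) t)
    (hℓ : ℓ ∉ (A.seenClusters P (⇑π ∘ P) t).image π) {s : ℕ} (hs : s ≤ t) :
    A.history (⇑(A.relabelDiscovered P π t ℓ) ∘ P) s = A.history (⇑π ∘ P) s :=
  A.history_congr fun _ hr => A.relabelDiscovered_apply_of_mem P hdisc hℓ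
    (mem_image_of_mem _ (mem_range.2 (by omega)))

theorem queryAt_relabelDiscovered (hdisc : A.IsDiscovery P (⇑π ∘ P) t)
    (hℓ : ℓ ∉ (A.seenClusters P (⇑π ∘ P) t).image π) {s : ℕ} (hs : s ≤ t) :
    A.queryAt (⇑(A.relabelDiscovered P π t ℓ) ∘ P) s = A.queryAt (⇑π ∘ P) s :=
  congrArg A.query (A.history_relabelDiscovered P hdisc hℓ hs)

theorem seenClusters_relabelDiscovered (hdisc : A.IsDiscovery P (⇑π ∘ P) t)
    (hℓ : ℓ ∉ (A.seenClusters P (⇑π ∘ P) t).image π) :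
    A.seenClusters P (⇑(A.relabelDiscovered P π t ℓ) ∘ P) t = A.seenClusters P (⇑π ∘ P) t :=
  image_congr fun _ hs => by
    simp only [A.queryAt_relabelDiscovered P hdisc hℓ (mem_range.1 hs).le]

theorem eq_of_relabelDiscovered_eq {π₁ π₂ : Perm α} {t₁ t₂ : ℕ} {ℓ₁ ℓ₂ : α}
    (hdisc₁ : A.IsDiscovery P (⇑π₁ ∘ P) t₁) (hdisc₂ : A.IsDiscovery P (⇑π₂ ∘ P) t₂)
    (hcard : #(A.seenClusters P (⇑π₁ ∘ P) t₁) = #(A.seenClusters P (⇑π₂ ∘ P) t₂))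
    (hpred₁ : A.PredictsAt (⇑π₁ ∘ P) t₁) (hpred₂ : A.PredictsAt (⇑π₂ ∘ P) t₂)
    (hℓ₁ : ℓ₁ ∉ (A.seenClusters P (⇑π₁ ∘ P) t₁).image π₁)
    (hℓ₂ : ℓ₂ ∉ (A.seenClusters P (⇑π₂ ∘ P) t₂).image π₂)
    (heq : A.relabelDiscovered P π₁ t₁ ℓ₁ = A.relabelDiscovered P π₂ t₂ ℓ₂) :
    π₁ = π₂ ∧ ℓ₁ = ℓ₂ := by
  have hq₁ := A.queryAt_relabelDiscovered P hdisc₁ hℓ₁ le_rfl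
  have hq₂ := A.queryAt_relabelDiscovered P hdisc₂ hℓ₂ le_rfl
  have hs₁ := A.seenClusters_relabelDiscovered P hdisc₁ hℓ₁
  have hs₂ := A.seenClusters_relabelDiscovered P hdisc₂ hℓ₂
  rw [← heq] at hq₂ hs₂
  -- both times are discoveries of the same number of clusters under the common relabeling
  obtain rfl : t₁ = t₂ := A.card_seenClusters_injOn P _
    (show A.IsDiscovery P _ t₁ by rw [IsDiscovery, hq₁, hs₁]; exact hdisc₁)
    (show A.IsDiscovery P _ t₂ by rw [IsDiscovery, hq₂, hs₂]; exact hdisc₂)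
    (by simp only [hs₁, hs₂, hcard])
  have hℓ : ℓ₁ = ℓ₂ := by
    rw [← A.relabelDiscovered_apply_discovered P (π := π₁) (t := t₁) (ℓ := ℓ₁),
      ← A.relabelDiscovered_apply_discovered P (π := π₂) (t := t₁) (ℓ := ℓ₂), ← heq, ← hq₁,
      hq₂]
  -- the correct predictions coincide since the histories do
  have hlabel : π₁ (P (A.queryAt (⇑π₁ ∘ P) t₁)) = π₂ (P (A.queryAt (⇑π₂ ∘ P) t₁)) :=
    calc π₁ (P (A.queryAt (⇑π₁ ∘ P) t₁)) = A.predict (A.history (⇑π₁ ∘ P) t₁) := hpred₁.symm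
      _ = A.predict (A.history (⇑π₂ ∘ P) t₁) := by
        rw [← A.history_relabelDiscovered P hdisc₁ hℓ₁ le_rfl,
          ← A.history_relabelDiscovered P hdisc₂ hℓ₂ le_rfl, heq]
      _ = π₂ (P (A.queryAt (⇑π₂ ∘ P) t₁)) := hpred₂
  rw [relabelDiscovered, relabelDiscovered, hlabel, hℓ] at heq
  exact ⟨mul_left_cancel heq, hℓ⟩

open scoped Classical in
theorem card_sub_mul_card_discoversCorrectly_le [Fintype α] (i : ℕ) :
    (Fintype.card α - i) * #{π : Perm α | A.DiscoversCorrectly P (⇑π ∘ P) i} ≤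
      (Fintype.card α).factorial := by
  set good : Finset (Perm α) := {π | A.DiscoversCorrectly P (⇑π ∘ P) i}
  have hgood : ∀ π ∈ good, A.DiscoversCorrectly P (⇑π ∘ P) i := fun π hπ => by
    simpa [good] using hπ
  choose! T hdisc hcard hpred using hgood
  set unused : Perm α → Finset α := fun π => univ \ (A.seenClusters P (⇑π ∘ P) (T π)).image π
  have hunused : ∀ π ∈ good, #(unused π) = Fintype.card α - i := fun π hπ => by
    rw [card_univ_sdiff, card_image_of_injective _ π.injective, hcard π hπ]
  have hinj : Set.InjOn (fun p : Σ _ : Perm α, α => A.relabelDiscovered P p.1 (T p.1) p.2)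
      (good.sigma unused) := by
    rintro ⟨π₁, ℓ₁⟩ h₁ ⟨π₂, ℓ₂⟩ h₂ heq
    simp only [coe_sigma, Set.mem_sigma_iff, mem_coe, unused, mem_sdiff, mem_univ,
      true_and] at h₁ h₂
    obtain ⟨rfl, rfl⟩ := A.eq_of_relabelDiscovered_eq P (hdisc _ h₁.1) (hdisc _ h₂.1)
      (by rw [hcard _ h₁.1, hcard _ h₂.1]) (hpred _ h₁.1) (hpred _ h₂.1) h₁.2 h₂.2 heq
    rfl
  calc (Fintype.card α - i) * #good = ∑ π ∈ good, #(unused π) := by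
        rw [sum_congr rfl hunused, sum_const, smul_eq_mul, mul_comm]
    _ = #(good.sigma unused) := (card_sigma _ _).symm
    _ ≤ #(univ : Finset (Perm α)) := card_le_card_of_injOn _ (fun _ _ => mem_univ _) hinj
    _ = (Fintype.card α).factorial := by rw [card_univ, Fintype.card_perm]

end Relabel

open scoped Classical in
theorem sum_card_discoversCorrectly_le [DecidableEq α] [Fintype α] (P : V → α) :
    (∑ π : Perm α, #{i ∈ range (Fintype.card α) | A.DiscoversCorrectly P (⇑π ∘ P) i} : ℝ) ≤
      (Fintype.card α).factorial * ∑ j ∈ range (Fintype.card α), (1 : ℝ) / (j + 1) := by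
  set k := Fintype.card α
  have hswap := sum_card_bipartiteAbove_eq_sum_card_bipartiteBelow (s := univ) (t := range k)
    (fun (π : Perm α) i => A.DiscoversCorrectly P (⇑π ∘ P) i)
  calc (∑ π : Perm α, #{i ∈ range k | A.DiscoversCorrectly P (⇑π ∘ P) i} : ℝ)
      = ∑ i ∈ range k, (#{π : Perm α | A.DiscoversCorrectly P (⇑π ∘ P) i} : ℝ) := by
        exact_mod_cast hswap
    _ ≤ ∑ i ∈ range k, (k.factorial : ℝ) * (1 / ((k - i : ℕ) : ℝ)) := by
        refine sum_le_sum fun i hi => ?_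
        have hpos : (0 : ℝ) < (k - i : ℕ) := by
          exact_mod_cast Nat.sub_pos_of_lt (mem_range.1 hi)
        rw [mul_one_div, le_div_iff₀ hpos, mul_comm]
        exact_mod_cast A.card_sub_mul_card_discoversCorrectly_le P i
    _ = k.factorial * ∑ j ∈ range k, (1 : ℝ) / (j + 1) := by
        rw [← mul_sum, sum_range_one_div_sub]

theorem card_sub_harmonic_mul_factorial_le_sum_mistakes [DecidableEq α] [Fintype α]
    [Fintype V] (P : V → α) (hA : A.Covers) (hP : Surjective P) :
    ((Fintype.card α : ℝ) - ∑ j ∈ range (Fintype.card α), (1 : ℝ) / (j + 1)) *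
        (Fintype.card α).factorial ≤
      ∑ π : Perm α, (A.mistakes (⇑π ∘ P) (Fintype.card V) : ℝ) := by
  classical
  set k := Fintype.card α
  have hmistakes : ∀ π : Perm α, (k : ℝ) ≤ A.mistakes (⇑π ∘ P) (Fintype.card V) +
      #{i ∈ range k | A.DiscoversCorrectly P (⇑π ∘ P) i} := fun π => by
    exact_mod_cast A.card_le_mistakes_add P _ hA hP
  have hcorrect := A.sum_card_discoversCorrectly_le P
  have hcount : ∑ _π : Perm α, (k : ℝ) = k * k.factorial := by
    rw [sum_const, card_univ, Fintype.card_perm, nsmul_eq_mul, mul_comm]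
  have := sum_le_sum fun π (_ : π ∈ univ) => hmistakes π
  rw [hcount, sum_add_distrib] at this
  linarith

end Learner

theorem stmt13_general (m n k : ℕ) (hk : 2 ≤ k)
    (P : Fin m × Fin n → Fin k)
    (hne : ∀ i : Fin k, (P ⁻¹' {i}).Nonempty)
    (A : Learner (Fin m × Fin n) (Fin k)) (hA : A.Covers) :
    ((k : ℝ) - ∑ j ∈ Finset.range k, (1 : ℝ) / (j + 1)) * (Nat.factorial k : ℝ) ≤
      ∑ π : Equiv.Perm (Fin k),
        (A.mistakes (fun v => π (P v)) (Fintype.card (Fin m × Fin n)) : ℝ) ∧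
    (k : ℝ) / 4 ≤ (k : ℝ) - ∑ j ∈ Finset.range k, (1 : ℝ) / (j + 1) := by
  have hP : Surjective P := hne
  have hbound := A.card_sub_harmonic_mul_factorial_le_sum_mistakes P hA hP
  rw [Fintype.card_fin] at hbound
  refine ⟨hbound, ?_⟩
  have hharmonic := sum_range_one_div_add_one_le (k := k) (by omega)
  have hk' : (2 : ℝ) ≤ k := by exact_mod_cast hk
  linarith

/-- on a grid graph (box product of two paths), for any partition
into `k` nonempty geodesically convex clusters, if the `k` labels are assigned to
the clusters by a uniformly random bijection, every self-directed learner makes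
at least `k − H_k` mistakes in expectation (stated as a sum over the `k!`
bijections); moreover `k − H_k ≥ k/4`. -/
theorem stmt13 (m n k : ℕ) (hm : 1 ≤ m) (hn : 1 ≤ n) (hk : 2 ≤ k)
    (P : Fin m × Fin n → Fin k)
    (hne : ∀ i : Fin k, (P ⁻¹' {i}).Nonempty)
    (hconv : ∀ i : Fin k,
      IsConvex (SimpleGraph.boxProd (SimpleGraph.pathGraph m) (SimpleGraph.pathGraph n))
        (P ⁻¹' {i}))
    (A : Learner (Fin m × Fin n) (Fin k)) (hA : A.Covers) :
    ((k : ℝ) - ∑ j ∈ Finset.range k, (1 : ℝ) / (j + 1)) * (Nat.factorial k : ℝ) ≤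
      ∑ π : Equiv.Perm (Fin k),
        (A.mistakes (fun v => π (P v)) (Fintype.card (Fin m × Fin n)) : ℝ) ∧
    (k : ℝ) / 4 ≤ (k : ℝ) - ∑ j ∈ Finset.range k, (1 : ℝ) / (j + 1) :=
  stmt13_general m n k hk P hne A hA
end
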